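/- arXiv:2109.07052 — 2 statements merged into one kernel-verified Lean document; each statement's English description precedes it below -/
import Mathlib

section
/- Let $X \subseteq H_n$ be a finite subset of the Hamming cube with at least two points. Then $M(X) = n/2$ if and only if the point $h = (1/2,\dots,1/2)$ lies in the affine hull of $X$ in $\mathbb{R}^n$. -/
/-! On `{0, 1}` we have `|a - b| = a + b - 2ab`, so for weights `α` summing to `1` the form
`∑ αᵢ αⱼ d₁(xᵢ, xⱼ)` equals `n/2 - 2 ‖h - ∑ αᵢ xᵢ‖²`. As `α` ranges over such weights, `∑ αᵢ xᵢ`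
ranges over the affine hull of `X`, which is closed; hence the supremum is `n/2` exactly when the
distance from `h` to the affine hull vanishes. -/

open Finset

theorem mem_affineSpan_range_iff_exists_sum_smul {k V ι : Type*} [Ring k] [Nontrivial k]
    [AddCommGroup V] [Module k V] [Fintype ι] {x : ι → V} {p : V} :
    p ∈ affineSpan k (Set.range x) ↔ ∃ w : ι → k, ∑ i, w i = 1 ∧ p = ∑ i, w i • x i := by
  constructor
  · intro hp
    obtain ⟨w, hw, rfl⟩ := eq_affineCombination_of_mem_affineSpan_of_fintype hp
    exact ⟨w, hw, univ.affineCombination_eq_linear_combination x w hw⟩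
  · rintro ⟨w, hw, rfl⟩
    rw [← univ.affineCombination_eq_linear_combination x w hw]
    exact affineCombination_mem_affineSpan hw x

theorem sSup_image_sub_mul_dist_sq_eq_iff {X : Type*} [PseudoMetricSpace X] {s : Set X}
    (hs : IsClosed s) (hne : s.Nonempty) (h : X) {c a : ℝ} (ha : 0 < a) :
    sSup ((fun p => c - a * dist h p ^ 2) '' s) = c ↔ h ∈ s := by
  constructor
  · intro hsup
    by_contra hh
    have hd : 0 < Metric.infDist h s := (hs.notMem_iff_infDist_pos hne).1 hh
    have hle : sSup ((fun p => c - a * dist h p ^ 2) '' s) ≤ c - a * Metric.infDist h s ^ 2 := by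
      refine csSup_le (hne.image _) ?_
      rintro _ ⟨p, hp, rfl⟩
      have hdist : Metric.infDist h s ≤ dist h p := Metric.infDist_le_dist_of_mem hp
      dsimp only
      gcongr
    rw [hsup] at hle
    nlinarith [mul_pos ha (pow_pos hd 2)]
  · intro hh
    refine IsGreatest.csSup_eq ⟨⟨h, hh, by simp⟩, ?_⟩
    rintro _ ⟨p, -, rfl⟩
    nlinarith [sq_nonneg (dist h p)]

theorem abs_sub_eq_add_sub_two_mul_of_eq_zero_or_eq_one {a b : ℝ} (ha : a = 0 ∨ a = 1)
    (hb : b = 0 ∨ b = 1) :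
    |a - b| = a + b - 2 * (a * b) := by
  rcases ha with rfl | rfl <;> rcases hb with rfl | rfl <;> norm_num

theorem sum_sum_mul_mul_add_sub_two_mul {ι : Type*} [Fintype ι] {α : ι → ℝ}
    (hα : ∑ i, α i = 1) (y : ι → ℝ) :
    ∑ i, ∑ j, α i * α j * (y i + y j - 2 * (y i * y j))
      = 1 / 2 - 2 * (1 / 2 - ∑ i, α i * y i) ^ 2 := by
  have expand : ∀ i j, α i * α j * (y i + y j - 2 * (y i * y j))
      = α i * y i * α j + α i * (α j * y j) - 2 * (α i * y i) * (α j * y j) := by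
    intros; ring
  simp only [expand, sum_add_distrib, sum_sub_distrib, ← mul_sum, ← sum_mul, hα]
  ring

theorem sum_sum_mul_mul_sum_abs_sub_eq {m n : ℕ} (x : Fin m → EuclideanSpace ℝ (Fin n))
    (hx : ∀ i j, x i j = 0 ∨ x i j = 1)
    (h : EuclideanSpace ℝ (Fin n)) (hh : ∀ j, h j = 1 / 2) {α : Fin m → ℝ} (hα : ∑ i, α i = 1) :
    ∑ i, ∑ j, α i * α j * (∑ t, |x i t - x j t|)
      = n / 2 - 2 * dist h (∑ i, α i • x i) ^ 2 := by
  have coord : ∀ t, (∑ i, α i • x i : EuclideanSpace ℝ (Fin n)) t = ∑ i, α i * x i t := by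
    simp
  calc ∑ i, ∑ j, α i * α j * (∑ t, |x i t - x j t|)
      = ∑ t, ∑ i, ∑ j, α i * α j * (x i t + x j t - 2 * (x i t * x j t)) := by
        simp only [mul_sum, abs_sub_eq_add_sub_two_mul_of_eq_zero_or_eq_one (hx _ _) (hx _ _)]
        exact (sum_congr rfl fun _ _ => sum_comm).trans sum_comm
    _ = ∑ t : Fin n, (1 / 2 - 2 * (1 / 2 - ∑ i, α i * x i t) ^ 2) := by
        simp only [sum_sum_mul_mul_add_sub_two_mul hα]
    _ = n / 2 - 2 * dist h (∑ i, α i • x i) ^ 2 := by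
        rw [PiLp.dist_sq_eq_of_L2]
        simp only [coord, hh, Real.dist_eq, sq_abs, sum_sub_distrib, ← mul_sum, sum_const,
          card_univ, Fintype.card_fin, nsmul_eq_mul]
        ring

theorem stmt_8_general {m n : ℕ} (hm : 2 ≤ m) (x : Fin m → EuclideanSpace ℝ (Fin n))
    (hx : ∀ i j, x i j = 0 ∨ x i j = 1)
    (h : EuclideanSpace ℝ (Fin n)) (hh : ∀ j, h j = 1 / 2) :
    sSup {v : ℝ | ∃ α : Fin m → ℝ, ∑ i, α i = 1 ∧
        v = ∑ i, ∑ j, α i * α j * (∑ t, |x i t - x j t|)} = n / 2 ↔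
      h ∈ affineSpan ℝ (Set.range x) := by
  have hspan : {v : ℝ | ∃ α : Fin m → ℝ, ∑ i, α i = 1 ∧
        v = ∑ i, ∑ j, α i * α j * (∑ t, |x i t - x j t|)}
      = (fun p => n / 2 - 2 * dist h p ^ 2) '' (affineSpan ℝ (Set.range x) : Set _) := by
    ext v
    simp only [Set.mem_ofPred_eq, Set.mem_image, SetLike.mem_coe,
      mem_affineSpan_range_iff_exists_sum_smul]
    constructor
    · rintro ⟨α, hα, rfl⟩
      exact ⟨_, ⟨α, hα, rfl⟩, (sum_sum_mul_mul_sum_abs_sub_eq x hx h hh hα).symm⟩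
    · rintro ⟨_, ⟨α, hα, rfl⟩, rfl⟩
      exact ⟨α, hα, (sum_sum_mul_mul_sum_abs_sub_eq x hx h hh hα).symm⟩
  have hne : (affineSpan ℝ (Set.range x) : Set (EuclideanSpace ℝ (Fin n))).Nonempty :=
    ⟨x ⟨0, by omega⟩, subset_affineSpan ℝ _ ⟨_, rfl⟩⟩
  rw [hspan]
  exact sSup_image_sub_mul_dist_sq_eq_iff (AffineSubspace.closed_of_finiteDimensional _) hne h
    two_pos

theorem stmt_8 {m n : ℕ} (hm : 2 ≤ m) (x : Fin m → EuclideanSpace ℝ (Fin n))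
    (hinj : Function.Injective x)
    (hx : ∀ i j, x i j = 0 ∨ x i j = 1)
    (h : EuclideanSpace ℝ (Fin n)) (hh : ∀ j, h j = 1 / 2) :
    sSup {v : ℝ | ∃ α : Fin m → ℝ, ∑ i, α i = 1 ∧
        v = ∑ i, ∑ j, α i * α j * (∑ t, |x i t - x j t|)} = n / 2 ↔
      h ∈ affineSpan ℝ (Set.range x) :=
  stmt_8_general hm x hx h hh
end

section
/- Let $X = \{x_1,\dots,x_m\}$ be an affinely independent subset of $H_n$ with $m \ge 2$, and $D$ its distance matrix. Then $\langle D^{-1}\mathbf{1},\mathbf{1}\rangle = (2r^2)^{-1}$, where $r$ is the radius of the unique sphere containing $X$ whose centre lies in the affine hull of $X$ (equivalently, the smallest Euclidean sphere containing all points of $X$). -/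
/-!
For 0/1-vectors the Hamming distance is the squared Euclidean distance, so `D` is the
squared-distance matrix of points on a sphere of radius `r` about `c`. Writing `yᵢ = xᵢ - c`,
its entries are `2r² - 2⟪yᵢ, yⱼ⟫`. The barycentric coordinates `w` of `c` satisfy
`∑ wⱼ yⱼ = 0`, hence `D w = 2r² 𝟙`; affine independence makes `D` invertible, so
`D⁻¹ 𝟙 = w / (2r²)` and summing gives `⟨D⁻¹ 𝟙, 𝟙⟩ = (2r²)⁻¹`.
-/

open Finset Matrix
open scoped InnerProductSpace

lemma abs_sub_eq_sq_sub_of_mem_zero_one {a b : ℝ} (ha : a = 0 ∨ a = 1) (hb : b = 0 ∨ b = 1) :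
    |a - b| = (a - b) ^ 2 := by
  rcases ha with rfl | rfl <;> rcases hb with rfl | rfl <;> norm_num

lemma EuclideanSpace.sum_abs_sub_eq_norm_sub_sq {n : Type*} [Fintype n]
    {x y : EuclideanSpace ℝ n} (hx : ∀ t, x t = 0 ∨ x t = 1) (hy : ∀ t, y t = 0 ∨ y t = 1) :
    ∑ t, |x t - y t| = ‖x - y‖ ^ 2 := by
  simp_rw [EuclideanSpace.real_norm_sq_eq, PiLp.sub_apply,
    abs_sub_eq_sq_sub_of_mem_zero_one (hx _) (hy _)]

lemma Matrix.sum_sum_inv_eq_inv_of_mulVec_eq_const {ι : Type*} [Fintype ι] [DecidableEq ι]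
    {A : Matrix ι ι ℝ} (hA : IsUnit A.det) {w : ι → ℝ} {a : ℝ}
    (hw : A *ᵥ w = fun _ ↦ a) (hw1 : ∑ i, w i = 1) :
    ∑ i, ∑ j, A⁻¹ i j = a⁻¹ := by
  have hw' : A⁻¹ *ᵥ (fun _ ↦ a) = w := by
    rw [← hw, mulVec_mulVec, nonsing_inv_mul A hA, one_mulVec]
  refine eq_inv_of_mul_eq_one_left ?_
  simp only [← hw1, ← hw', mulVec, dotProduct, sum_mul]

section SquaredDistanceMatrix

variable {E ι : Type*} [NormedAddCommGroup E] [InnerProductSpace ℝ E]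

def sqDistMatrix (x : ι → E) : Matrix ι ι ℝ :=
  Matrix.of fun i j ↦ ‖x i - x j‖ ^ 2

variable {x : ι → E} {c : E} {r : ℝ}

lemma norm_sub_sq_eq_of_norm_sub_eq (hr : ∀ i, ‖x i - c‖ = r) (i j : ι) :
    ‖x i - x j‖ ^ 2 = 2 * r ^ 2 - 2 * ⟪x i - c, x j - c⟫_ℝ := by
  rw [← sub_sub_sub_cancel_right (x i) (x j) c, norm_sub_sq_real, hr, hr]
  ring

variable [Fintype ι]

lemma sqDistMatrix_mulVec_apply (hr : ∀ i, ‖x i - c‖ = r) (v : ι → ℝ) (i : ι) :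
    (sqDistMatrix x *ᵥ v) i = 2 * r ^ 2 * ∑ j, v j - 2 * ⟪x i - c, ∑ j, v j • (x j - c)⟫_ℝ := by
  simp only [mulVec, dotProduct, sqDistMatrix, of_apply, norm_sub_sq_eq_of_norm_sub_eq hr,
    inner_sum, real_inner_smul_right, mul_sum, ← sum_sub_distrib]
  exact sum_congr rfl fun j _ ↦ by ring

lemma exists_sum_eq_one_sum_smul_sub_eq_zero (hc : c ∈ affineSpan ℝ (Set.range x)) :
    ∃ w : ι → ℝ, ∑ i, w i = 1 ∧ ∑ i, w i • (x i - c) = 0 := by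
  classical
  obtain ⟨w, hw1, hcw⟩ := eq_affineCombination_of_mem_affineSpan_of_fintype hc
  refine ⟨w, hw1, ?_⟩
  rw [affineCombination_eq_weightedVSubOfPoint_vadd_of_sum_eq_one _ w x hw1 c,
    vadd_eq_add, right_eq_add, weightedVSubOfPoint_apply] at hcw
  exact hcw

lemma det_sqDistMatrix_ne_zero [DecidableEq ι] (hind : AffineIndependent ℝ x)
    (hc : c ∈ affineSpan ℝ (Set.range x)) (hr : ∀ i, ‖x i - c‖ = r) (hr0 : r ≠ 0) :
    (sqDistMatrix x).det ≠ 0 := by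
  obtain ⟨w, hw1, hw0⟩ := exists_sum_eq_one_sum_smul_sub_eq_zero hc
  -- for `v` in the kernel, pairing with `w` gives `∑ v = 0`, then `‖∑ vⱼ (xⱼ - c)‖² = 0`
  rw [Ne, ← exists_mulVec_eq_zero_iff]
  rintro ⟨v, hv0, hv⟩
  set u := ∑ j, v j • (x j - c) with hu
  have hvu (i : ι) : ⟪x i - c, u⟫_ℝ = r ^ 2 * ∑ j, v j := by
    have := congrFun hv i
    rw [sqDistMatrix_mulVec_apply hr, Pi.zero_apply] at this
    linarith
  have hsum : ∑ j, v j = 0 := by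
    have : ⟪∑ j, w j • (x j - c), u⟫_ℝ = r ^ 2 * ∑ j, v j := by
      simp_rw [sum_inner, real_inner_smul_left, hvu, ← sum_mul, hw1, one_mul]
    rw [hw0, inner_zero_left] at this
    exact (mul_eq_zero.1 this.symm).resolve_left (pow_ne_zero 2 hr0)
  have hu0 : u = 0 := by
    refine (inner_self_eq_zero (𝕜 := ℝ)).1 ?_
    nth_rw 1 [hu]
    simp_rw [sum_inner, real_inner_smul_left, hvu, hsum, mul_zero, sum_const_zero]
  refine hv0 (funext fun i ↦ hind univ v hsum ?_ i (mem_univ i))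
  rw [weightedVSub_eq_weightedVSubOfPoint_of_sum_eq_zero _ _ _ hsum c, weightedVSubOfPoint_apply]
  exact hu0

theorem sum_sum_inv_sqDistMatrix [DecidableEq ι] (hind : AffineIndependent ℝ x)
    (hc : c ∈ affineSpan ℝ (Set.range x)) (hr : ∀ i, ‖x i - c‖ = r) :
    ∑ i, ∑ j, (sqDistMatrix x)⁻¹ i j = (2 * r ^ 2)⁻¹ := by
  rcases eq_or_ne r 0 with rfl | hr0
  -- all points equal `c`, so both sides are `0⁻¹ = 0`
  · have hxc (i : ι) : x i = c := sub_eq_zero.1 (norm_eq_zero.1 (hr i))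
    have : sqDistMatrix x = 0 := by ext i j; simp [sqDistMatrix, hxc]
    simp [this]
  obtain ⟨w, hw1, hw0⟩ := exists_sum_eq_one_sum_smul_sub_eq_zero hc
  refine sum_sum_inv_eq_inv_of_mulVec_eq_const
    (isUnit_iff_ne_zero.2 (det_sqDistMatrix_ne_zero hind hc hr hr0)) (funext fun i ↦ ?_) hw1
  rw [sqDistMatrix_mulVec_apply hr, hw1, hw0, inner_zero_right]
  ring

end SquaredDistanceMatrix

theorem stmt_19_general {m n : ℕ} (x : Fin m → EuclideanSpace ℝ (Fin n))
    (hx : ∀ i j, x i j = 0 ∨ x i j = 1)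
    (hind : AffineIndependent ℝ x)
    (D : Matrix (Fin m) (Fin m) ℝ) (hD : ∀ i j, D i j = ∑ t, |x i t - x j t|)
    (c : EuclideanSpace ℝ (Fin n)) (r : ℝ)
    (hc : c ∈ affineSpan ℝ (Set.range x))
    (hr : ∀ i, ‖x i - c‖ = r) :
    ∑ i, ∑ j, D⁻¹ i j = (2 * r ^ 2)⁻¹ := by
  obtain rfl : D = sqDistMatrix x := by
    ext i j
    rw [hD, EuclideanSpace.sum_abs_sub_eq_norm_sub_sq (hx i) (hx j)]
    rfl
  exact sum_sum_inv_sqDistMatrix hind hc hr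

theorem stmt_19 {m n : ℕ} (hm : 2 ≤ m) (x : Fin m → EuclideanSpace ℝ (Fin n))
    (hx : ∀ i j, x i j = 0 ∨ x i j = 1)
    (hind : AffineIndependent ℝ x)
    (D : Matrix (Fin m) (Fin m) ℝ) (hD : ∀ i j, D i j = ∑ t, |x i t - x j t|)
    (c : EuclideanSpace ℝ (Fin n)) (r : ℝ)
    (hc : c ∈ affineSpan ℝ (Set.range x))
    (hr : ∀ i, ‖x i - c‖ = r) :
    ∑ i, ∑ j, D⁻¹ i j = (2 * r ^ 2)⁻¹ :=
  stmt_19_general x hx hind D hD c r hc hr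
end
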